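/- Let g(t) be the 7-dimensional Lie algebra with brackets ab=e, ad=f, af=g, bc=f, bd=g, cd=−t²e, ce=−g. For t ≠ 0, the change of basis {ta+c, 2t(tb−d), −ta+c, −2t(tb+d), 4t²(te−f), 4t²(te+f), −8t³g} transforms g(t) into g_{137B} (brackets ab=e, ae=g, cd=f, cf=g, bd=g); i.e., g(t) ≅ g_{137B} for all t ≠ 0. -/

import Mathlib

noncomputable section

/-- Standard basis vector of `ℝ⁷`. -/
def e (k : Fin 7) : Fin 7 → ℝ := Pi.single k 1

/-- Structure constants of `g(t)`: `ab=e, ad=f, af=g, bc=f, bd=g, cd=−t²e, ce=−g`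
(basis `a,…,g = e 0,…,e 6`), extended antisymmetrically. -/
def tblT (t : ℝ) : Fin 7 → Fin 7 → Fin 7 → ℝ :=
  ![![0, e 4, 0, e 5, 0, e 6, 0],
    ![-e 4, 0, e 5, e 6, 0, 0, 0],
    ![0, -e 5, 0, -(t ^ 2) • e 4, -e 6, 0, 0],
    ![-e 5, -e 6, (t ^ 2) • e 4, 0, 0, 0, 0],
    ![0, 0, e 6, 0, 0, 0, 0],
    ![-e 6, 0, 0, 0, 0, 0, 0],
    ![0, 0, 0, 0, 0, 0, 0]]

/-- The bracket of `g(t)`. -/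
def brT (t : ℝ) (x y : Fin 7 → ℝ) : Fin 7 → ℝ :=
  ∑ p : Fin 7, ∑ q : Fin 7, (x p * y q) • tblT t p q

/-- Structure constants of `g_{137B}`: `ab=e, ae=g, cd=f, cf=g, bd=g`. -/
def tblB : Fin 7 → Fin 7 → Fin 7 → ℝ :=
  ![![0, e 4, 0, 0, e 6, 0, 0],
    ![-e 4, 0, 0, e 6, 0, 0, 0],
    ![0, 0, 0, e 5, 0, e 6, 0],
    ![0, -e 6, -e 5, 0, 0, 0, 0],
    ![-e 6, 0, 0, 0, 0, 0, 0],
    ![0, 0, -e 6, 0, 0, 0, 0],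
    ![0, 0, 0, 0, 0, 0, 0]]

/-- The bracket of `g_{137B}`. -/
def brB (x y : Fin 7 → ℝ) : Fin 7 → ℝ :=
  ∑ p : Fin 7, ∑ q : Fin 7, (x p * y q) • tblB p q

/-- The new basis `{ta+c, 2t(tb−d), −ta+c, −2t(tb+d), 4t²(te−f), 4t²(te+f), −8t³g}`
of `g(t)`. -/
def T (t : ℝ) : Fin 7 → (Fin 7 → ℝ) :=
  ![t • e 0 + e 2,
    (2 * t ^ 2) • e 1 - (2 * t) • e 3,
    -(t • e 0) + e 2,
    -((2 * t ^ 2) • e 1) - (2 * t) • e 3,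
    (4 * t ^ 3) • e 4 - (4 * t ^ 2) • e 5,
    (4 * t ^ 3) • e 4 + (4 * t ^ 2) • e 5,
    -((8 * t ^ 3) • e 6)]

/-- The change-of-basis map. -/
def L (t : ℝ) (x : Fin 7 → ℝ) : Fin 7 → ℝ := ∑ i : Fin 7, x i • T t i

/-! Both brackets are bilinear and `L t` is linear, so `L t` is a homomorphism as soon as it
matches the 49 structure constants on the new basis `T t`. For `t ≠ 0` the vectors `T t i`
span `ℝ⁷`: each of `a, …, g` is a nonzero multiple of a sum or difference of two of them
(or of `T t 6`), so the endomorphism `L t` of `ℝ⁷` is onto, hence bijective. -/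

section StructureConstants

variable {ι R M : Type*} [Fintype ι] [CommSemiring R] [AddCommMonoid M] [Module R M]

def structBracket (c : ι → ι → M) : (ι → R) →ₗ[R] (ι → R) →ₗ[R] M :=
  Fintype.linearCombination R fun p => Fintype.linearCombination R (c p)

theorem structBracket_apply (c : ι → ι → M) (x y : ι → R) :
    structBracket c x y = ∑ p, ∑ q, (x p * y q) • c p q := by
  simp only [structBracket, Fintype.linearCombination_apply, LinearMap.sum_apply,
    LinearMap.smul_apply, Finset.smul_sum, mul_smul]

variable [DecidableEq ι]

@[simp]
theorem structBracket_single (c : ι → ι → M) (i j : ι) :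
    structBracket (R := R) c (Pi.single i 1) (Pi.single j 1) = c i j := by
  simp [structBracket]

theorem apply_eq_structBracket_of_single {N P : Type*} [AddCommMonoid N] [Module R N]
    [AddCommMonoid P] [Module R P] (B : N →ₗ[R] N →ₗ[R] P) (f : (ι → R) →ₗ[R] N)
    (g : M →ₗ[R] P) (c : ι → ι → M)
    (h : ∀ p q, B (f (Pi.single p 1)) (f (Pi.single q 1)) = g (c p q)) (x y : ι → R) :
    B (f x) (f y) = g (structBracket c x y) := by
  have hB := LinearMap.ext_basis (B := B.compl₁₂ f f) (B' := (structBracket c).compr₂ g)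
    (Pi.basisFun R ι) (Pi.basisFun R ι) (by simpa using h)
  exact congr($hB x y)

end StructureConstants

theorem brT_eq (t : ℝ) : brT t = fun x y => structBracket (tblT t) x y := by
  ext x y
  simp only [brT, structBracket_apply]

theorem brB_eq : brB = fun x y => structBracket tblB x y := by
  ext x y
  simp only [brB, structBracket_apply]

theorem L_eq (t : ℝ) : L t = Fintype.linearCombination ℝ (T t) := rfl

theorem brT_T_T (t : ℝ) (p q : Fin 7) : brT t (T t p) (T t q) = L t (tblB p q) := by
  rw [brT_eq, L_eq]
  fin_cases p <;> fin_cases q <;> simp [T, tblT, tblB, e] <;> module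

theorem span_T_eq_top {t : ℝ} (ht : t ≠ 0) : Submodule.span ℝ (Set.range (T t)) = ⊤ := by
  set S := Submodule.span ℝ (Set.range (T t))
  have hT (i : Fin 7) : T t i ∈ S := Submodule.subset_span ⟨i, rfl⟩
  have mem_of_smul {c : ℝ} {v : Fin 7 → ℝ} (hc : c ≠ 0) (hv : c • v ∈ S) : v ∈ S :=
    (Submodule.smul_mem_iff S hc).1 hv
  refine eq_top_iff.2 ((Pi.basisFun ℝ (Fin 7)).span_eq ▸ Submodule.span_le.2 ?_)
  rintro _ ⟨k, rfl⟩
  fin_cases k <;> simp only [Pi.basisFun_apply]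
  · refine mem_of_smul (c := 2 * t) (by positivity) ?_
    convert sub_mem (hT 0) (hT 2) using 1; simp [T, e]; module
  · refine mem_of_smul (c := 4 * t ^ 2) (by positivity) ?_
    convert sub_mem (hT 1) (hT 3) using 1; simp [T, e]; module
  · refine mem_of_smul (c := 2) two_ne_zero ?_
    convert add_mem (hT 0) (hT 2) using 1; simp [T, e]; module
  · refine mem_of_smul (c := -4 * t) (by positivity) ?_
    convert add_mem (hT 1) (hT 3) using 1; simp [T, e]; module
  · refine mem_of_smul (c := 8 * t ^ 3) (by positivity) ?_
    convert add_mem (hT 4) (hT 5) using 1; simp [T, e]; module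
  · refine mem_of_smul (c := 8 * t ^ 2) (by positivity) ?_
    convert sub_mem (hT 5) (hT 4) using 1; simp [T, e]; module
  · refine mem_of_smul (c := -8 * t ^ 3) (by positivity) ?_
    convert hT 6 using 1; simp [T, e]

/-- For `t ≠ 0`, the change of basis `T t` transforms `g(t)` into `g_{137B}`;
i.e. `g(t) ≅ g_{137B}` for all `t ≠ 0`. -/
theorem gt_isomorphic_g137B (t : ℝ) (ht : t ≠ 0) :
    Function.Bijective (L t) ∧
    ∀ x y : Fin 7 → ℝ, brT t (L t x) (L t y) = L t (brB x y) := by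
  rw [brB_eq, brT_eq, L_eq]
  have hsurj := (span_range_eq_top_iff_surjective_fintypeLinearCombination ℝ (T t)).1
    (span_T_eq_top ht)
  refine ⟨⟨LinearMap.injective_iff_surjective.2 hsurj, hsurj⟩,
    apply_eq_structBracket_of_single _ _ _ _ fun p q => ?_⟩
  simpa [brT_eq, L_eq] using brT_T_T t p q
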